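/- Let e : ι → H and f : κ → H be orthonormal bases of H (ι, κ finite types), with associated classical structures δ_e and δ_f, and let D_e = { T : H →L[ℂ] H | ∀ i, ∃ c : ℂ, T (e i) = c • e i } and D_f = { T : H →L[ℂ] H | ∀ j, ∃ c : ℂ, T (f j) = c • f j } be the induced commutative von Neumann subalgebras of diagonal operators. Then every subspace K copyable along both δ_e and δ_f satisfies K = ⊥ or K = ⊤ if and only if D_e ∩ D_f = { z • (1 : H →L[ℂ] H) | z : ℂ }, i.e. the two algebras intersect in the scalar multiples of the identity. -/

import Mathlib

/-!
The only vectors `v` with `δ_e v = v ⊗ v` are `0` and the basis vectors `e i`. Hence `K` is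
copyable along `δ_e` exactly when every `e i` lies in `K` or in `Kᗮ`, i.e. when `P_K` is diagonal
in `e`. A subspace copyable along both structures thus has `P_K ∈ D_e ∩ D_f`, and a scalar
projection is `0` or `1`. Conversely, each eigenspace of an operator diagonal in both bases
contains or is orthogonal to every `e i` and every `f j`, so it is copyable along both; an
eigenspace containing some `e i` is then all of `H`.
-/

open scoped TensorProduct InnerProductSpace

/-- The orthogonal projection of `H` onto the subspace `K`, regarded as an endomorphism
`P_K : H →ₗ[ℂ] H`. -/
noncomputable def projL {H : Type*} [NormedAddCommGroup H] [InnerProductSpace ℂ H]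
    [FiniteDimensional ℂ H] (K : Submodule ℂ H) : H →ₗ[ℂ] H :=
  K.subtype ∘ₗ K.orthogonalProjectionOnto.toLinearMap

/-- The classical structure `δ_e : H →ₗ[ℂ] H ⊗[ℂ] H` associated with an orthonormal basis
`e`, determined by `δ_e x = ∑ i, ⟪e i, x⟫_ℂ • (e i ⊗ₜ e i)`. -/
noncomputable def delta {ι H : Type*} [Fintype ι] [NormedAddCommGroup H]
    [InnerProductSpace ℂ H] (e : ι → H) : H →ₗ[ℂ] H ⊗[ℂ] H :=
  ∑ i, (innerSL ℂ (e i)).toLinearMap.smulRight (e i ⊗ₜ[ℂ] e i)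

/-- A subspace `K` of `H` is copyable along `δ_e` if `δ_e ∘ₗ P_K = (P_K ⊗ P_K) ∘ₗ δ_e`. -/
def Copyable {ι H : Type*} [Fintype ι] [NormedAddCommGroup H] [InnerProductSpace ℂ H]
    [FiniteDimensional ℂ H] (e : ι → H) (K : Submodule ℂ H) : Prop :=
  delta e ∘ₗ projL K = TensorProduct.map (projL K) (projL K) ∘ₗ delta e

open Submodule Module.End

section
variable {H : Type*} [NormedAddCommGroup H] [InnerProductSpace ℂ H]

lemma projL_eq_starProjection [FiniteDimensional ℂ H] (K : Submodule ℂ H) :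
    projL K = K.starProjection.toLinearMap := rfl

lemma eq_bot_or_eq_top_of_starProjection_eq_smul_one {K : Submodule ℂ H}
    [K.HasOrthogonalProjection] {z : ℂ} (hK : K.starProjection = z • 1) : K = ⊥ ∨ K = ⊤ := by
  rw [← K.range_starProjection, hK]
  rcases eq_or_ne z 0 with rfl | hz
  · simp
  · refine Or.inr (LinearMap.range_eq_top.2 fun x => ⟨z⁻¹ • x, ?_⟩)
    simp [smul_smul, hz]

variable {ι : Type*} [Fintype ι]

lemma delta_apply (e : ι → H) (x : H) :
    delta e x = ∑ i, ⟪e i, x⟫_ℂ • (e i ⊗ₜ[ℂ] e i) := by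
  simp [delta, LinearMap.sum_apply]

lemma delta_apply_self (e : OrthonormalBasis ι ℂ H) (i : ι) :
    delta e (e i) = e i ⊗ₜ[ℂ] e i := by
  classical
  simp [delta_apply, orthonormal_iff_ite.mp e.orthonormal]

lemma inner_mul_inner_of_delta_eq_tmul [DecidableEq ι] (e : OrthonormalBasis ι ℂ H) {v : H}
    (hv : delta e v = v ⊗ₜ[ℂ] v) (j k : ι) :
    ⟪e j, v⟫_ℂ * ⟪e k, v⟫_ℂ = if j = k then ⟪e j, v⟫_ℂ else 0 := by
  have := congrArg (fun t => (e.toBasis.tensorProduct e.toBasis).repr t (j, k)) hv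
  simp only [delta_apply, map_sum, map_smul, Finsupp.finsetSum_apply, Finsupp.smul_apply,
    Module.Basis.tensorProduct_repr_tmul_apply, OrthonormalBasis.coe_toBasis_repr_apply,
    OrthonormalBasis.repr_apply_apply, orthonormal_iff_ite.mp e.orthonormal] at this
  rw [mul_comm, ← smul_eq_mul, ← this]
  by_cases hjk : j = k
  · subst hjk; simp
  · simp [hjk, Ne.symm hjk]

lemma eq_zero_or_exists_eq_of_delta_eq_tmul (e : OrthonormalBasis ι ℂ H) {v : H}
    (hv : delta e v = v ⊗ₜ[ℂ] v) : v = 0 ∨ ∃ i, v = e i := by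
  classical
  have hcoeff := inner_mul_inner_of_delta_eq_tmul e hv
  by_cases hzero : ∀ j, ⟪e j, v⟫_ℂ = 0
  · exact Or.inl <| InnerProductSpace.ext_inner_left_basis e.toBasis fun j => by simp [hzero j]
  push Not at hzero
  obtain ⟨j, hj⟩ := hzero
  have hj_one : ⟪e j, v⟫_ℂ = 1 := by simpa [hj] using hcoeff j j
  refine Or.inr ⟨j, InnerProductSpace.ext_inner_left_basis e.toBasis fun k => ?_⟩
  rcases eq_or_ne k j with rfl | hkj
  · simp [hj_one]
  · simpa [hj_one, hkj, Ne.symm hkj, orthonormal_iff_ite.mp e.orthonormal] using hcoeff j k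

lemma copyable_iff [FiniteDimensional ℂ H] (e : OrthonormalBasis ι ℂ H) (K : Submodule ℂ H) :
    Copyable e K ↔ ∀ i, e i ∈ K ∨ e i ∈ Kᗮ := by
  simp only [Copyable, projL_eq_starProjection]
  constructor
  · intro h i
    have hcopy : delta e (K.starProjection (e i)) =
        K.starProjection (e i) ⊗ₜ[ℂ] K.starProjection (e i) := by
      simpa [delta_apply_self] using LinearMap.congr_fun h (e i)
    rcases eq_zero_or_exists_eq_of_delta_eq_tmul e hcopy with h0 | ⟨j, hj⟩
    · exact Or.inr ((starProjection_apply_eq_zero_iff K).1 h0)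
    · -- `re ⟪P eᵢ, eᵢ⟫ = ‖P eᵢ‖²` forces the basis vector `P eᵢ` to be `eᵢ` itself
      have hji : RCLike.re ⟪e j, e i⟫_ℂ = 1 := by
        rw [← hj, re_inner_starProjection_eq_normSq, coe_norm, ← starProjection_apply, hj,
          e.orthonormal.1 j]
        norm_num
      have : j = i := by
        by_contra hne
        simp [e.orthonormal.2 hne] at hji
      exact Or.inl (starProjection_eq_self_iff.1 (hj.trans (congrArg e this)))
  · intro h
    refine e.toBasis.ext fun i => ?_
    rcases h i with hK | hK
    · simp [delta_apply_self, starProjection_eq_self_iff.2 hK]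
    · simp [delta_apply_self, (starProjection_apply_eq_zero_iff K).2 hK]

lemma exists_starProjection_apply_eq_smul_of_copyable [FiniteDimensional ℂ H]
    (e : OrthonormalBasis ι ℂ H) {K : Submodule ℂ H} (hK : Copyable e K) (i : ι) :
    ∃ c : ℂ, K.starProjection (e i) = c • e i := by
  rcases (copyable_iff e K).1 hK i with hi | hi
  · exact ⟨1, by simpa using starProjection_eq_self_iff.2 hi⟩
  · exact ⟨0, by simpa using (starProjection_apply_eq_zero_iff K).2 hi⟩

lemma inner_apply_eq_mul_inner_of_apply_eq_smul (e : OrthonormalBasis ι ℂ H) {T : H →ₗ[ℂ] H}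
    {c : ι → ℂ} (hT : ∀ i, T (e i) = c i • e i) (i : ι) (x : H) :
    ⟪e i, T x⟫_ℂ = c i * ⟪e i, x⟫_ℂ := by
  classical
  conv_lhs => rw [← e.sum_repr' x]
  simp [hT, orthonormal_iff_ite.mp e.orthonormal, mul_comm]

lemma mem_eigenspace_or_mem_orthogonal (e : OrthonormalBasis ι ℂ H) {T : H →ₗ[ℂ] H}
    {c : ι → ℂ} (hT : ∀ i, T (e i) = c i • e i) (μ : ℂ) (i : ι) :
    e i ∈ eigenspace T μ ∨ e i ∈ (eigenspace T μ)ᗮ := by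
  rcases eq_or_ne (c i) μ with rfl | hne
  · exact Or.inl (mem_eigenspace_iff.2 (hT i))
  · refine Or.inr fun x hx => ?_
    have h := inner_apply_eq_mul_inner_of_apply_eq_smul e hT i x
    rw [mem_eigenspace_iff.1 hx, inner_smul_right] at h
    rw [← inner_conj_symm, (mul_eq_mul_right_iff.1 h).resolve_left hne.symm, map_zero]

lemma exists_eq_smul_one_of_diagonal [FiniteDimensional ℂ H] {κ : Type*} [Fintype κ]
    (e : OrthonormalBasis ι ℂ H) (f : OrthonormalBasis κ ℂ H)
    (h : ∀ K : Submodule ℂ H, Copyable e K → Copyable f K → K = ⊥ ∨ K = ⊤) {T : H →L[ℂ] H}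
    (he : ∀ i, ∃ c : ℂ, T (e i) = c • e i) (hf : ∀ j, ∃ c : ℂ, T (f j) = c • f j) :
    ∃ z : ℂ, T = z • 1 := by
  cases subsingleton_or_nontrivial H
  · exact ⟨0, ContinuousLinearMap.ext fun _ => Subsingleton.elim _ _⟩
  choose ce hce using he
  choose cf hcf using hf
  obtain ⟨i₀⟩ := e.toBasis.index_nonempty
  set K := eigenspace (T : H →ₗ[ℂ] H) (ce i₀)
  rcases h K ((copyable_iff e K).2 (mem_eigenspace_or_mem_orthogonal e hce _))
    ((copyable_iff f K).2 (mem_eigenspace_or_mem_orthogonal f hcf _)) with hK | hK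
  · have : e i₀ ∈ K := mem_eigenspace_iff.2 (hce i₀)
    rw [hK, mem_bot] at this
    exact absurd this (e.orthonormal.ne_zero i₀)
  · exact ⟨ce i₀, ContinuousLinearMap.ext fun x =>
      mem_eigenspace_iff.1 (hK ▸ mem_top : x ∈ K)⟩

end

/-- Two classical structures `δ_e` and `δ_f` are partially complementary (no nontrivial
subspace is copyable along both) if and only if the induced commutative von Neumann
subalgebras `D_e` and `D_f` of diagonal operators intersect in the scalar multiples of
the identity. -/
theorem partially_complementary_iff_diagonal_algebras_trivial_inter
    {ι κ H : Type*} [Fintype ι] [Fintype κ] [NormedAddCommGroup H] [InnerProductSpace ℂ H]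
    [FiniteDimensional ℂ H] (e : OrthonormalBasis ι ℂ H) (f : OrthonormalBasis κ ℂ H) :
    (∀ K : Submodule ℂ H, Copyable (⇑e) K → Copyable (⇑f) K → K = ⊥ ∨ K = ⊤) ↔
      {T : H →L[ℂ] H | ∀ i : ι, ∃ c : ℂ, T (e i) = c • e i} ∩
          {T : H →L[ℂ] H | ∀ j : κ, ∃ c : ℂ, T (f j) = c • f j} =
        {T : H →L[ℂ] H | ∃ z : ℂ, T = z • (1 : H →L[ℂ] H)} := by
  constructor
  · intro h
    ext T
    refine ⟨fun ⟨he, hf⟩ => exists_eq_smul_one_of_diagonal e f h he hf, ?_⟩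
    rintro ⟨z, rfl⟩
    exact ⟨fun i => ⟨z, rfl⟩, fun j => ⟨z, rfl⟩⟩
  · intro h K hKe hKf
    obtain ⟨z, hz⟩ : K.starProjection ∈ {T : H →L[ℂ] H | ∃ z : ℂ, T = z • 1} :=
      h ▸ ⟨exists_starProjection_apply_eq_smul_of_copyable e hKe,
        exists_starProjection_apply_eq_smul_of_copyable f hKf⟩
    exact eq_bot_or_eq_top_of_starProjection_eq_smul_one hz
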